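/- arXiv:2605.26732 — 2 statements merged into one kernel-verified Lean document; each statement's English description precedes it below -/
import Mathlib

section
/- Let S ⊆ ℝⁿ be measurable and A, Â : S → ℝ≥0, τ, τ̂ : S → ℝ measurable with A(r) ≤ A_max and Â(r) ≤ Â_max for all r ∈ S, and suppose A − Â and Δτ := τ̂ − τ are square-integrable on S. With u(r) = A(r)exp(iντ(r)) and û(r) = Â(r)exp(iντ̂(r)) for ν ≥ 0, one has ∫_S |û − u|² ≤ ∫_S (Â − A)² + ν²·A_max·Â_max·∫_S (τ̂ − τ)². -/
open MeasureTheory Complex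

/-!
Since the phase factors have modulus one, `‖Â e^{iντ̂} - A e^{iντ}‖² = (Â - A)² + A Â ‖e^{iντ̂} - e^{iντ}‖²`,
and the chord `‖e^{ix} - e^{iy}‖ = 2 |sin ((x - y) / 2)|` is at most `|x - y|`. Bounding `A Â` by
`A_max Â_max` gives a pointwise bound on `S`, which is then integrated.
-/

theorem norm_smul_sub_smul_sq_of_norm_eq_one {E : Type*} [NormedAddCommGroup E]
    [InnerProductSpace ℝ E] {x y : E} (hx : ‖x‖ = 1) (hy : ‖y‖ = 1) (a b : ℝ) :
    ‖b • y - a • x‖ ^ 2 = (b - a) ^ 2 + a * b * ‖y - x‖ ^ 2 := by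
  rw [norm_sub_sq_real, norm_sub_sq_real, norm_smul, norm_smul, hx, hy, real_inner_smul_left,
    real_inner_smul_right, Real.norm_eq_abs, Real.norm_eq_abs, mul_one, mul_one, sq_abs, sq_abs]
  ring

theorem norm_exp_I_mul_ofReal_sub_exp_I_mul_ofReal_le (a b : ℝ) :
    ‖exp (I * b) - exp (I * a)‖ ≤ |b - a| := by
  have hfactor : exp (I * b) - exp (I * a) = exp (I * a) * (exp (I * ↑(b - a)) - 1) := by
    rw [mul_sub, ← Complex.exp_add]; push_cast; ring_nf
  rw [hfactor, norm_mul, norm_exp_I_mul_ofReal, one_mul, ← Real.norm_eq_abs]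
  exact Real.norm_exp_I_mul_ofReal_sub_one_le

theorem norm_mul_exp_sub_mul_exp_sq_le {a b amax bmax : ℝ} (ha : 0 ≤ a) (hb : 0 ≤ b)
    (hamax : a ≤ amax) (hbmax : b ≤ bmax) (ν s t : ℝ) :
    ‖(b : ℂ) * exp (I * (ν * t)) - (a : ℂ) * exp (I * (ν * s))‖ ^ 2
      ≤ (b - a) ^ 2 + ν ^ 2 * amax * bmax * (t - s) ^ 2 := by
  have hunit (x : ℝ) : ‖exp (I * (ν * x))‖ = 1 := by
    exact_mod_cast norm_exp_I_mul_ofReal (ν * x)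
  have hphase : ‖exp (I * (ν * t)) - exp (I * (ν * s))‖ ^ 2 ≤ ν ^ 2 * (t - s) ^ 2 := by
    have h := norm_exp_I_mul_ofReal_sub_exp_I_mul_ofReal_le (ν * s) (ν * t)
    push_cast at h
    calc _ ≤ |ν * t - ν * s| ^ 2 := by gcongr
      _ = ν ^ 2 * (t - s) ^ 2 := by rw [sq_abs]; ring
  have hamp : a * b ≤ amax * bmax := mul_le_mul hamax hbmax hb (ha.trans hamax)
  calc _ = (b - a) ^ 2 + a * b * ‖exp (I * (ν * t)) - exp (I * (ν * s))‖ ^ 2 := by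
        rw [← real_smul (x := b), ← real_smul (x := a),
          norm_smul_sub_smul_sq_of_norm_eq_one (hunit s) (hunit t)]
    _ ≤ (b - a) ^ 2 + amax * bmax * (ν ^ 2 * (t - s) ^ 2) := by
        gcongr
        exact (mul_nonneg ha hb).trans hamp
    _ = (b - a) ^ 2 + ν ^ 2 * amax * bmax * (t - s) ^ 2 := by ring

theorem frequency_sensitive_upper_bound_general
    {n : ℕ} (S : Set (Fin n → ℝ)) (hS : MeasurableSet S)
    (A Ahat τ τhat : (Fin n → ℝ) → ℝ) (ν : ℝ)
    (Amax Ahatmax : ℝ)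
    (hA0 : ∀ r, 0 ≤ A r) (hAhat0 : ∀ r, 0 ≤ Ahat r)
    (hAub : ∀ r ∈ S, A r ≤ Amax) (hAhatub : ∀ r ∈ S, Ahat r ≤ Ahatmax)
    (hdiff2 : Integrable (fun r => (Ahat r - A r) ^ 2) (volume.restrict S))
    (hΔτ2 : Integrable (fun r => (τhat r - τ r) ^ 2) (volume.restrict S)) :
    ∫ r in S, (‖(Ahat r : ℂ) * Complex.exp (Complex.I * (ν * τhat r)) -
        (A r : ℂ) * Complex.exp (Complex.I * (ν * τ r))‖) ^ 2
      ≤ (∫ r in S, (Ahat r - A r) ^ 2) +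
        ν ^ 2 * Amax * Ahatmax * ∫ r in S, (τhat r - τ r) ^ 2 := by
  have hbound : ∀ᵐ r ∂volume.restrict S,
      ‖(Ahat r : ℂ) * exp (I * (ν * τhat r)) - (A r : ℂ) * exp (I * (ν * τ r))‖ ^ 2
        ≤ (Ahat r - A r) ^ 2 + ν ^ 2 * Amax * Ahatmax * (τhat r - τ r) ^ 2 := by
    filter_upwards [ae_restrict_mem hS] with r hr
    exact norm_mul_exp_sub_mul_exp_sq_le (hA0 r) (hAhat0 r) (hAub r hr) (hAhatub r hr) ν _ _
  calc _ ≤ ∫ r in S, ((Ahat r - A r) ^ 2 + ν ^ 2 * Amax * Ahatmax * (τhat r - τ r) ^ 2) :=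
        integral_mono_of_nonneg (.of_forall fun _ ↦ by positivity)
          (hdiff2.add (hΔτ2.const_mul _)) hbound
    _ = _ := by rw [integral_add hdiff2 (hΔτ2.const_mul _), integral_const_mul]

theorem frequency_sensitive_upper_bound
    {n : ℕ} (S : Set (Fin n → ℝ)) (hS : MeasurableSet S)
    (A Ahat τ τhat : (Fin n → ℝ) → ℝ) (ν : ℝ) (hν : 0 ≤ ν)
    (Amax Ahatmax : ℝ)
    (hA0 : ∀ r, 0 ≤ A r) (hAhat0 : ∀ r, 0 ≤ Ahat r)
    (hAub : ∀ r ∈ S, A r ≤ Amax) (hAhatub : ∀ r ∈ S, Ahat r ≤ Ahatmax)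
    (hAm : Measurable A) (hAhatm : Measurable Ahat)
    (hτm : Measurable τ) (hτhatm : Measurable τhat)
    (hdiff2 : Integrable (fun r => (Ahat r - A r) ^ 2) (volume.restrict S))
    (hΔτ2 : Integrable (fun r => (τhat r - τ r) ^ 2) (volume.restrict S)) :
    ∫ r in S, (‖(Ahat r : ℂ) * Complex.exp (Complex.I * (ν * τhat r)) -
        (A r : ℂ) * Complex.exp (Complex.I * (ν * τ r))‖) ^ 2
      ≤ (∫ r in S, (Ahat r - A r) ^ 2) +
        ν ^ 2 * Amax * Ahatmax * ∫ r in S, (τhat r - τ r) ^ 2 :=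
  frequency_sensitive_upper_bound_general S hS A Ahat τ τhat ν Amax Ahatmax hA0 hAhat0 hAub hAhatub
    hdiff2 hΔτ2
end

section
/- Let S ⊆ ℝⁿ be measurable, A, Â : S → ℝ≥0 square-integrable, τ, τ̂ : S → ℝ measurable, and ν ∈ ℝ. With u(r) = A(r)e^{iντ(r)} and û(r) = Â(r)e^{iντ̂(r)}, one has the Cauchy–Schwarz-type bound: ∫_S |û − u|² ≤ ∫_S (Â − A)² + ν²·(∫_S A²·(τ̂ − τ)²)^{1/2}·(∫_S Â²·(τ̂ − τ)²)^{1/2}, provided A(τ̂−τ) and Â(τ̂−τ) are square-integrable. -/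
/-!
Pointwise, `|û - u|² = (Â - A)² + 4 A Â sin² (ν Δτ / 2) ≤ (Â - A)² + ν² (A Δτ) (Â Δτ)`, because
`|sin z| ≤ |z|` and `A Â ≥ 0`. Integrating, the last term is bounded by Cauchy–Schwarz in `L²`.
-/

open MeasureTheory Complex Real

theorem norm_ofReal_mul_exp_sub_ofReal_mul_exp_sq (a b x y : ℝ) :
    ‖(b : ℂ) * exp (I * y) - (a : ℂ) * exp (I * x)‖ ^ 2
      = (b - a) ^ 2 + 4 * a * b * Real.sin ((y - x) / 2) ^ 2 := by
  have hcos := Real.cos_two_mul_eq_one_sub ((y - x) / 2)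
  rw [mul_div_cancel₀ _ two_ne_zero, Real.cos_sub] at hcos
  rw [Complex.sq_norm, mul_comm I, mul_comm I, exp_mul_I, exp_mul_I]
  simp only [normSq_apply, sub_re, sub_im, add_re, add_im, mul_re, mul_im, cos_ofReal_re,
    sin_ofReal_re, cos_ofReal_im, sin_ofReal_im, ofReal_re, ofReal_im, I_re, I_im]
  linear_combination -(2 * a * b) * hcos + b ^ 2 * Real.sin_sq_add_cos_sq y
    + a ^ 2 * Real.sin_sq_add_cos_sq x

theorem norm_ofReal_mul_exp_sub_ofReal_mul_exp_sq_le {a b : ℝ} (hab : 0 ≤ a * b) (x y : ℝ) :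
    ‖(b : ℂ) * exp (I * y) - (a : ℂ) * exp (I * x)‖ ^ 2 ≤ (b - a) ^ 2 + a * b * (y - x) ^ 2 := by
  rw [norm_ofReal_mul_exp_sub_ofReal_mul_exp_sq]
  have := Real.sin_sq_le_sq (x := (y - x) / 2)
  nlinarith

theorem integral_mul_le_sqrt_integral_sq_mul_sqrt_integral_sq {α : Type*} [MeasurableSpace α]
    {μ : Measure α} {f g : α → ℝ} (hf : MemLp f 2 μ) (hg : MemLp g 2 μ) :
    ∫ x, f x * g x ∂μ ≤ √(∫ x, f x ^ 2 ∂μ) * √(∫ x, g x ^ 2 ∂μ) := by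
  calc ∫ x, f x * g x ∂μ ≤ ∫ x, ‖f x‖ * ‖g x‖ ∂μ :=
        integral_mono (hf.integrable_mul hg) (hf.norm.integrable_mul hg.norm)
          fun x => by simpa [abs_mul] using le_abs_self (f x * g x)
    _ ≤ (∫ x, ‖f x‖ ^ (2 : ℝ) ∂μ) ^ (1 / 2 : ℝ) * (∫ x, ‖g x‖ ^ (2 : ℝ) ∂μ) ^ (1 / 2 : ℝ) :=
        integral_mul_norm_le_Lp_mul_Lq .two_two (by simpa) (by simpa)
    _ = √(∫ x, f x ^ 2 ∂μ) * √(∫ x, g x ^ 2 ∂μ) := by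
        simp [Real.sqrt_eq_rpow]

theorem cauchy_schwarz_frequency_bound_general
    {n : ℕ} (S : Set (Fin n → ℝ))
    (A Ahat τ τhat : (Fin n → ℝ) → ℝ) (ν : ℝ)
    (hA0 : ∀ r, 0 ≤ A r) (hAhat0 : ∀ r, 0 ≤ Ahat r)
    (hAm : Measurable A) (hAhatm : Measurable Ahat)
    (hτm : Measurable τ) (hτhatm : Measurable τhat)
    (hA2 : Integrable (fun r => A r ^ 2) (volume.restrict S))
    (hAhat2 : Integrable (fun r => Ahat r ^ 2) (volume.restrict S))
    (hAΔ2 : Integrable (fun r => A r ^ 2 * (τhat r - τ r) ^ 2) (volume.restrict S))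
    (hAhatΔ2 : Integrable (fun r => Ahat r ^ 2 * (τhat r - τ r) ^ 2) (volume.restrict S)) :
    ∫ r in S, (‖(Ahat r : ℂ) * Complex.exp (Complex.I * (ν * τhat r)) -
        (A r : ℂ) * Complex.exp (Complex.I * (ν * τ r))‖) ^ 2
      ≤ (∫ r in S, (Ahat r - A r) ^ 2) +
        ν ^ 2 * Real.sqrt (∫ r in S, A r ^ 2 * (τhat r - τ r) ^ 2) *
          Real.sqrt (∫ r in S, Ahat r ^ 2 * (τhat r - τ r) ^ 2) := by
  have hA := (memLp_two_iff_integrable_sq hAm.aestronglyMeasurable).2 hA2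
  have hAhat := (memLp_two_iff_integrable_sq hAhatm.aestronglyMeasurable).2 hAhat2
  have hAΔ : MemLp (fun r => A r * (τhat r - τ r)) 2 (volume.restrict S) :=
    (memLp_two_iff_integrable_sq (hAm.mul (hτhatm.sub hτm)).aestronglyMeasurable).2
      (by simpa only [Pi.mul_apply, Pi.sub_apply, mul_pow] using hAΔ2)
  have hAhatΔ : MemLp (fun r => Ahat r * (τhat r - τ r)) 2 (volume.restrict S) :=
    (memLp_two_iff_integrable_sq (hAhatm.mul (hτhatm.sub hτm)).aestronglyMeasurable).2
      (by simpa only [Pi.mul_apply, Pi.sub_apply, mul_pow] using hAhatΔ2)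
  have hdiff : Integrable (fun r => (Ahat r - A r) ^ 2) (volume.restrict S) :=
    (hAhat.sub hA).integrable_sq
  have hprod : Integrable (fun r => A r * (τhat r - τ r) * (Ahat r * (τhat r - τ r)))
      (volume.restrict S) :=
    hAΔ.integrable_mul hAhatΔ
  have hpoint : ∀ r,
      ‖(Ahat r : ℂ) * exp (I * (ν * τhat r)) - (A r : ℂ) * exp (I * (ν * τ r))‖ ^ 2 ≤
        (Ahat r - A r) ^ 2 + ν ^ 2 * (A r * (τhat r - τ r) * (Ahat r * (τhat r - τ r))) := by
    intro r
    have h := norm_ofReal_mul_exp_sub_ofReal_mul_exp_sq_le (mul_nonneg (hA0 r) (hAhat0 r))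
      (ν * τ r) (ν * τhat r)
    push_cast at h
    linear_combination h
  calc _ ≤ ∫ r in S, ((Ahat r - A r) ^ 2
          + ν ^ 2 * (A r * (τhat r - τ r) * (Ahat r * (τhat r - τ r)))) :=
        integral_mono_of_nonneg (.of_forall fun r => by positivity) (hdiff.add (hprod.const_mul _))
          (.of_forall hpoint)
    _ = (∫ r in S, (Ahat r - A r) ^ 2)
          + ν ^ 2 * ∫ r in S, A r * (τhat r - τ r) * (Ahat r * (τhat r - τ r)) := by
        rw [integral_add hdiff (hprod.const_mul _), integral_const_mul]
    _ ≤ _ := by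
        rw [mul_assoc]
        gcongr
        simpa only [mul_pow] using
          integral_mul_le_sqrt_integral_sq_mul_sqrt_integral_sq hAΔ hAhatΔ

theorem cauchy_schwarz_frequency_bound
    {n : ℕ} (S : Set (Fin n → ℝ)) (hS : MeasurableSet S)
    (A Ahat τ τhat : (Fin n → ℝ) → ℝ) (ν : ℝ)
    (hA0 : ∀ r, 0 ≤ A r) (hAhat0 : ∀ r, 0 ≤ Ahat r)
    (hAm : Measurable A) (hAhatm : Measurable Ahat)
    (hτm : Measurable τ) (hτhatm : Measurable τhat)
    (hA2 : Integrable (fun r => A r ^ 2) (volume.restrict S))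
    (hAhat2 : Integrable (fun r => Ahat r ^ 2) (volume.restrict S))
    (hAΔ2 : Integrable (fun r => A r ^ 2 * (τhat r - τ r) ^ 2) (volume.restrict S))
    (hAhatΔ2 : Integrable (fun r => Ahat r ^ 2 * (τhat r - τ r) ^ 2) (volume.restrict S)) :
    ∫ r in S, (‖(Ahat r : ℂ) * Complex.exp (Complex.I * (ν * τhat r)) -
        (A r : ℂ) * Complex.exp (Complex.I * (ν * τ r))‖) ^ 2
      ≤ (∫ r in S, (Ahat r - A r) ^ 2) +
        ν ^ 2 * Real.sqrt (∫ r in S, A r ^ 2 * (τhat r - τ r) ^ 2) *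
          Real.sqrt (∫ r in S, Ahat r ^ 2 * (τhat r - τ r) ^ 2) :=
  cauchy_schwarz_frequency_bound_general S A Ahat τ τhat ν hA0 hAhat0 hAm hAhatm hτm hτhatm hA2
    hAhat2 hAΔ2 hAhatΔ2
end
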